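/- For every positive integer n, the total variation of the function x ↦ (1/n)·sin(n·x) over the closed interval [0, 2π] equals 4. -/
import Mathlib

open Set Real ENNReal

/-- Variation of a monotone function on a closed interval. -/
lemma evar_monotoneOn_Icc {f : ℝ → ℝ} {a b : ℝ} (hab : a ≤ b)
    (hf : MonotoneOn f (Icc a b)) :
    eVariationOn f (Icc a b) = ENNReal.ofReal (f b - f a) := by
  apply le_antisymm
  · have := hf.eVariationOn_le (left_mem_Icc.2 hab) (right_mem_Icc.2 hab)
    simpa using this
  · have h := eVariationOn.edist_le f (left_mem_Icc.2 hab) (right_mem_Icc.2 hab)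
    have : edist (f a) (f b) = ENNReal.ofReal (f b - f a) := by
      rw [edist_dist, Real.dist_eq, abs_sub_comm,
        abs_of_nonneg (sub_nonneg.2 (hf (left_mem_Icc.2 hab) (right_mem_Icc.2 hab) hab))]
    rwa [this] at h

/-- Variation of an antitone function on a closed interval. -/
lemma evar_antitoneOn_Icc {f : ℝ → ℝ} {a b : ℝ} (hab : a ≤ b)
    (hf : AntitoneOn f (Icc a b)) :
    eVariationOn f (Icc a b) = ENNReal.ofReal (f a - f b) := by
  have hneg : MonotoneOn (fun x => -f x) (Icc a b) := fun x hx y hy hxy =>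
    neg_le_neg (hf hx hy hxy)
  have h1 : eVariationOn f (Icc a b) = eVariationOn (fun x => -f x) (Icc a b) := by
    apply le_antisymm
    · have : LipschitzWith 1 (fun y : ℝ => -y) := LipschitzWith.id.neg
      have := (this.lipschitzOnWith (s := univ)).comp_eVariationOn_le
        (g := fun x => -f x) (s := Icc a b) (mapsTo_univ _ _)
      simpa [Function.comp_def] using this
    · have : LipschitzWith 1 (fun y : ℝ => -y) := LipschitzWith.id.neg
      have := (this.lipschitzOnWith (s := univ)).comp_eVariationOn_le
        (g := f) (s := Icc a b) (mapsTo_univ _ _)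
      simpa [Function.comp_def] using this
  rw [h1, evar_monotoneOn_Icc hab hneg]
  ring_nf

/-- Scaling a function by a nonnegative constant scales the variation. -/
lemma evar_const_mul (c : ℝ) (hc : 0 ≤ c) (f : ℝ → ℝ) (s : Set ℝ) :
    eVariationOn (fun x => c * f x) s = ENNReal.ofReal c * eVariationOn f s := by
  simp only [eVariationOn, ENNReal.mul_iSup]
  congr 1
  ext p
  rw [Finset.mul_sum]
  refine Finset.sum_congr rfl fun i _ => ?_
  rw [edist_dist, edist_dist, Real.dist_eq, Real.dist_eq, ← mul_sub, abs_mul,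
    abs_of_nonneg hc, ENNReal.ofReal_mul hc]

lemma sin_monotoneOn_first : MonotoneOn Real.sin (Icc 0 (π / 2)) := by
  have := Real.strictMonoOn_sin.monotoneOn
  exact this.mono (Icc_subset_Icc (by positivity) le_rfl |>.trans
    (Icc_subset_Icc (by linarith [Real.pi_pos]) le_rfl))

lemma sin_antitoneOn_mid : AntitoneOn Real.sin (Icc (π / 2) (3 * π / 2)) := by
  intro x hx y hy hxy
  rw [← Real.sin_pi_sub x, ← Real.sin_pi_sub y]
  exact Real.strictMonoOn_sin.monotoneOn
    ⟨by linarith [hy.2], by linarith [hy.1]⟩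
    ⟨by linarith [hx.2], by linarith [hx.1]⟩ (by linarith)

lemma sin_monotoneOn_last : MonotoneOn Real.sin (Icc (3 * π / 2) (2 * π)) := by
  intro x hx y hy hxy
  have hx' : Real.sin x = Real.sin (x - 2 * π) := by
    rw [← Real.sin_add_int_mul_two_pi (x - 2 * π) 1]; ring_nf
  have hy' : Real.sin y = Real.sin (y - 2 * π) := by
    rw [← Real.sin_add_int_mul_two_pi (y - 2 * π) 1]; ring_nf
  rw [hx', hy']
  exact Real.strictMonoOn_sin.monotoneOn
    ⟨by linarith [hx.1], by linarith [hx.2, Real.pi_pos]⟩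
    ⟨by linarith [hy.1], by linarith [hy.2, Real.pi_pos]⟩ (by linarith)

lemma sin_three_pi_div_two : Real.sin (3 * π / 2) = -1 := by
  have : (3 : ℝ) * π / 2 = π + π / 2 := by ring
  rw [this, Real.sin_add]
  simp

/-- Variation of sine over one full period. -/
lemma evar_sin_period : eVariationOn Real.sin (Icc 0 (2 * π)) = 4 := by
  have hπ := Real.pi_pos
  have h1 : eVariationOn Real.sin (Icc 0 (π / 2)) = ENNReal.ofReal 1 := by
    rw [evar_monotoneOn_Icc (by positivity) sin_monotoneOn_first]
    simp
  have h2 : eVariationOn Real.sin (Icc (π / 2) (3 * π / 2)) = ENNReal.ofReal 2 := by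
    rw [evar_antitoneOn_Icc (by linarith) sin_antitoneOn_mid]
    rw [Real.sin_pi_div_two, sin_three_pi_div_two]
    norm_num
  have h3 : eVariationOn Real.sin (Icc (3 * π / 2) (2 * π)) = ENNReal.ofReal 1 := by
    rw [evar_monotoneOn_Icc (by linarith) sin_monotoneOn_last]
    rw [Real.sin_two_pi, sin_three_pi_div_two]
    norm_num
  have key := eVariationOn.Icc_add_Icc Real.sin (a := 0) (b := π / 2) (c := 3 * π / 2)
    (by positivity) (by linarith) (mem_univ _)
  have key2 := eVariationOn.Icc_add_Icc Real.sin (a := 0) (b := 3 * π / 2) (c := 2 * π)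
    (by positivity) (by linarith) (mem_univ _)
  simp only [univ_inter] at key key2
  rw [← key2, ← key, h1, h2, h3]
  rw [← ENNReal.ofReal_add (by norm_num) (by norm_num),
    ← ENNReal.ofReal_add (by norm_num) (by norm_num)]
  norm_num

/-- Variation of sine over `k` full periods. -/
lemma evar_sin_periods (k : ℕ) :
    eVariationOn Real.sin (Icc 0 (k * (2 * π))) = 4 * k := by
  induction k with
  | zero =>
    simp only [Nat.cast_zero, zero_mul, mul_zero, Icc_self]
    exact eVariationOn.subsingleton _ (subsingleton_singleton)
  | succ k ih =>
    have hπ := Real.pi_pos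
    have hk : (0:ℝ) ≤ k * (2 * π) := by positivity
    have hk2 : (k:ℝ) * (2 * π) ≤ (k + 1 : ℕ) * (2 * π) := by
      push_cast; nlinarith
    have key := eVariationOn.Icc_add_Icc Real.sin (a := (0:ℝ)) (b := k * (2 * π))
      (c := (k + 1 : ℕ) * (2 * π)) hk hk2 (mem_univ _)
    simp only [univ_inter] at key
    have htrans : eVariationOn Real.sin (Icc ((k:ℝ) * (2 * π)) ((k + 1 : ℕ) * (2 * π))) = 4 := by
      have hcomp := eVariationOn.comp_eq_of_monotoneOn Real.sin
        (fun x : ℝ => x + k * (2 * π))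
        (t := Icc 0 (2 * π)) (fun x _ y _ hxy => by dsimp; linarith)
      have himg : (fun x : ℝ => x + k * (2 * π)) '' Icc 0 (2 * π)
          = Icc ((k:ℝ) * (2 * π)) ((k + 1 : ℕ) * (2 * π)) := by
        rw [Set.image_add_const_Icc, zero_add]
        congr 1
        push_cast
        ring
      have hfun : (Real.sin ∘ fun x : ℝ => x + k * (2 * π)) = Real.sin := by
        funext x
        simp [Real.sin_add_nat_mul_two_pi]
      rw [himg, hfun] at hcomp
      rw [← hcomp, evar_sin_period]
    rw [← key, ih, htrans]
    push_cast
    ring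

/-- For every positive integer `n`, the total variation of `x ↦ (1/n)·sin(n·x)`
over the closed interval `[0, 2π]` equals `4`. -/
theorem totalVariation_inv_n_sin_nx (n : ℕ) (hn : 1 ≤ n) :
    eVariationOn (fun x : ℝ => (1 / n : ℝ) * Real.sin (n * x))
      (Set.Icc 0 (2 * Real.pi)) = 4 := by
  have hπ := Real.pi_pos
  have hn0 : (0:ℝ) < n := by exact_mod_cast hn
  rw [evar_const_mul (1 / n) (by positivity)]
  have hcomp := eVariationOn.comp_eq_of_monotoneOn Real.sin
    (fun x : ℝ => (n:ℝ) * x) (t := Icc 0 (2 * π))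
    (fun x _ y _ hxy => by dsimp; nlinarith)
  have himg : (fun x : ℝ => (n:ℝ) * x) '' Icc 0 (2 * π) = Icc 0 ((n:ℝ) * (2 * π)) := by
    ext y
    simp only [mem_image, mem_Icc]
    constructor
    · rintro ⟨x, ⟨hx0, hx1⟩, rfl⟩
      exact ⟨by positivity, by nlinarith⟩
    · rintro ⟨hy0, hy1⟩
      refine ⟨y / n, ⟨by positivity, ?_⟩, by field_simp⟩
      rw [div_le_iff₀ hn0]
      nlinarith
  have : (fun x : ℝ => Real.sin ((n:ℝ) * x)) = Real.sin ∘ fun x : ℝ => (n:ℝ) * x := rfl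
  rw [this, hcomp, himg, evar_sin_periods n]
  rw [show (4 : ℝ≥0∞) * n = ENNReal.ofReal (4 * n) by
    rw [ENNReal.ofReal_mul (by norm_num)]
    simp]
  rw [← ENNReal.ofReal_mul (by positivity)]
  rw [show (1 / (n:ℝ)) * (4 * n) = 4 by field_simp]
  norm_num
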